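/- The intersection of two inert subgroups of a group G is inert in G. -/
import Mathlib


/-- A subgroup `H ≤ G` is inert in `G` if for every finitely generated subgroup
`K ≤ G`, the intersection `H ⊓ K` is finitely generated of rank at most `rank K`. -/
def Inert {G : Type*} [Group G] (H : Subgroup G) : Prop :=
  ∀ K : Subgroup G, ∀ hK : Group.FG K,
    ∃ h : Group.FG ↥(H ⊓ K), @Group.rank ↥(H ⊓ K) _ h ≤ @Group.rank ↥K _ hK

/-- The intersection of two inert subgroups of `G` is inert in `G`. -/
theorem inert_inf {G : Type*} [Group G] (H₁ H₂ : Subgroup G)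
    (h1 : Inert H₁) (h2 : Inert H₂) : Inert (H₁ ⊓ H₂) := by
  intro K hK
  obtain ⟨hfg2, hle2⟩ := h2 K hK
  obtain ⟨hfg1, hle1⟩ := h1 (H₂ ⊓ K) hfg2
  rw [inf_assoc]
  exact ⟨hfg1, hle1.trans hle2⟩
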